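/- Let f = Σ_{r=0}^n x_r^{d_1} g_r be a CW-Nagata polynomial of bidegree (d_1,d_2). For every j with 1 ≤ j ≤ d_2, the bihomogeneous component Ann(f)_{(0,j)} (operators of bidegree (0,j) annihilating f) is spanned as a K-vector space exactly by the monomials U_1^{s_1}⋯U_m^{s_m} with s_1+⋯+s_m = j such that u_1^{s_1}⋯u_m^{s_m} divides none of g_0,…,g_n; equivalently, a K-linear combination of monomials of degree j in U_1,…,U_m annihilates f if and only if the coefficient of every monomial whose u-counterpart divides some g_r is zero. -/

import Mathlib

open MvPolynomial

namespace CW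

variable {σ K : Type*} [CommSemiring K]

/-- A generic "monomial contraction-type" action of the polynomial ring on itself,
determined by a structure coefficient `ν c a` (the coefficient produced when the
operator monomial with exponent `a` acts on the monomial with exponent `c`). -/
noncomputable def genAct (ν : (σ →₀ ℕ) → (σ →₀ ℕ) → K) (α f : MvPolynomial σ K) :
    MvPolynomial σ K :=
  Finsupp.sum (AddMonoidAlgebra.coeff α) fun a ca => Finsupp.sum (AddMonoidAlgebra.coeff f) fun c cf => monomial (c - a) (ν c a * (ca * cf))

theorem genAct_zero_left (ν : (σ →₀ ℕ) → (σ →₀ ℕ) → K) (f : MvPolynomial σ K) :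
    genAct ν 0 f = 0 := by
  unfold genAct
  simp

theorem genAct_zero_right (ν : (σ →₀ ℕ) → (σ →₀ ℕ) → K) (α : MvPolynomial σ K) :
    genAct ν α 0 = 0 := by
  unfold genAct
  simp

theorem genAct_add_left (ν : (σ →₀ ℕ) → (σ →₀ ℕ) → K) (α β f : MvPolynomial σ K) :
    genAct ν (α + β) f = genAct ν α f + genAct ν β f := by
  unfold genAct
  rw [AddMonoidAlgebra.coeff_add]
  apply Finsupp.sum_add_index'
  · intro a
    simp
  · intro a b₁ b₂
    rw [← Finsupp.sum_add]
    apply Finsupp.sum_congr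
    intro c _
    rw [add_mul, mul_add, map_add]

theorem genAct_add_right (ν : (σ →₀ ℕ) → (σ →₀ ℕ) → K) (α f g : MvPolynomial σ K) :
    genAct ν α (f + g) = genAct ν α f + genAct ν α g := by
  unfold genAct
  rw [← Finsupp.sum_add]
  apply Finsupp.sum_congr
  intro a _
  rw [AddMonoidAlgebra.coeff_add]
  apply Finsupp.sum_add_index'
  · intro c
    simp only [mul_zero, map_zero]
  · intro c c₁ c₂
    rw [mul_add, mul_add, map_add]

theorem genAct_monomial (ν : (σ →₀ ℕ) → (σ →₀ ℕ) → K) (a c : σ →₀ ℕ) (r s : K) :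
    genAct ν (monomial a r) (monomial c s) = monomial (c - a) (ν c a * (r * s)) := by
  unfold genAct
  rw [← single_eq_monomial a r, ← single_eq_monomial c s]
  simp [Finsupp.sum_single_index]

theorem genAct_mul {ν : (σ →₀ ℕ) → (σ →₀ ℕ) → K}
    (hν : ∀ c a b, ν c (a + b) = ν c b * ν (c - b) a) (α β f : MvPolynomial σ K) :
    genAct ν (α * β) f = genAct ν α (genAct ν β f) := by
  induction α using MvPolynomial.induction_on' with
  | add p q hp hq => rw [add_mul, genAct_add_left, hp, hq, genAct_add_left]
  | monomial a r =>
    induction β using MvPolynomial.induction_on' with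
    | add p q hp hq =>
      rw [mul_add, genAct_add_left, hp, hq, ← genAct_add_right, genAct_add_left]
    | monomial b s =>
      induction f using MvPolynomial.induction_on' with
      | add p q hp hq =>
        rw [genAct_add_right, hp, hq, ← genAct_add_right, ← genAct_add_right]
      | monomial c t =>
        rw [monomial_mul, genAct_monomial, genAct_monomial, genAct_monomial,
          show c - (a + b) = c - b - a from by rw [tsub_tsub, add_comm], hν]
        congr 1
        ring

/-- The annihilator ideal of `f` under the action `genAct ν`. -/
noncomputable def annG (ν : (σ →₀ ℕ) → (σ →₀ ℕ) → K)
    (hν : ∀ c a b, ν c (a + b) = ν c b * ν (c - b) a) (f : MvPolynomial σ K) :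
    Ideal (MvPolynomial σ K) where
  carrier := {α | genAct ν α f = 0}
  zero_mem' := genAct_zero_left ν f
  add_mem' := by
    intro a b ha hb
    show genAct ν (a + b) f = 0
    rw [genAct_add_left, ha, hb, add_zero]
  smul_mem' := by
    intro c α hα
    show genAct ν (c * α) f = 0
    rw [genAct_mul hν, hα, genAct_zero_right]

/-- Structure coefficient of the contraction (apolarity) action: `X^a` sends `x^c`
to `x^(c-a)` if `a ≤ c` and to `0` otherwise. -/
noncomputable def cnu (c a : σ →₀ ℕ) : K :=
  open scoped Classical in if a ≤ c then 1 else 0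

theorem cnu_mul (c a b : σ →₀ ℕ) :
    (cnu c (a + b) : K) = cnu c b * cnu (c - b) a := by
  classical
  unfold cnu
  by_cases hb : b ≤ c
  · by_cases ha : a ≤ c - b
    · have h : a + b ≤ c := (le_tsub_iff_right hb).mp ha
      simp [hb, ha, h]
    · have h : ¬ a + b ≤ c := fun h => ha ((le_tsub_iff_right hb).mpr h)
      simp [hb, ha, h]
  · have h : ¬ a + b ≤ c := fun h => hb (le_trans le_add_self h)
    simp [hb, h]

/-- The contraction action `α ∘ f`. -/
noncomputable def cAct (α f : MvPolynomial σ K) : MvPolynomial σ K :=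
  genAct cnu α f

/-- The annihilator `Ann(f)` of `f` under the contraction action, as an ideal. -/
noncomputable def cAnn (f : MvPolynomial σ K) : Ideal (MvPolynomial σ K) :=
  annG cnu cnu_mul f

theorem mem_cAnn {f α : MvPolynomial σ K} : α ∈ cAnn f ↔ cAct α f = 0 := Iff.rfl

/-- The `K`-submodule of polynomials all of whose monomials satisfy `P`. -/
noncomputable def bihom (K : Type*) [CommSemiring K] {σ : Type*} (P : (σ →₀ ℕ) → Prop) :
    Submodule K (MvPolynomial σ K) where
  carrier := {p | ∀ c ∈ p.support, P c}
  zero_mem' := by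
    intro c hc
    simp at hc
  add_mem' := by
    classical
    intro p q hp hq c hc
    rcases Finset.mem_union.mp (MvPolynomial.support_add hc) with h | h
    · exact hp c h
    · exact hq c h
  smul_mem' := by
    intro k p hp c hc
    exact hp c (MvPolynomial.support_smul hc)

/-- The x-degree of an exponent vector. -/
def degX {n m : ℕ} (c : (Fin (n + 1) ⊕ Fin m) →₀ ℕ) : ℕ := ∑ r, c (Sum.inl r)

/-- The u-degree of an exponent vector. -/
def degU {n m : ℕ} (c : (Fin (n + 1) ⊕ Fin m) →₀ ℕ) : ℕ := ∑ k, c (Sum.inr k)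

/-- The bihomogeneous component `T_(i,j)`. -/
noncomputable def Tbi (K : Type*) [CommSemiring K] {n m : ℕ} (i j : ℕ) :
    Submodule K (MvPolynomial (Fin (n + 1) ⊕ Fin m) K) :=
  bihom K fun c => degX c = i ∧ degU c = j

/-- The bigraded component `A_(i,j)` of `A = T ⧸ Ann(f)`: the image of `T_(i,j)`
in the quotient. -/
noncomputable def Abi {K : Type*} [Field K] {n m : ℕ}
    (f : MvPolynomial (Fin (n + 1) ⊕ Fin m) K) (i j : ℕ) :
    Submodule K (MvPolynomial (Fin (n + 1) ⊕ Fin m) K ⧸ cAnn f) :=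
  (Tbi K i j).map (Ideal.Quotient.mkₐ K (cAnn f)).toLinearMap

/-! On the monomial `U^s` the contraction sends `x_r^{d₁} u^{g_r}` to `x_r^{d₁} u^{g_r - s}` if
`s ≤ g_r` and to `0` otherwise. Because `d₁ ≥ 1`, the exponent `x_r^{d₁} u^{g_r - s}` determines
both `r` and `s`, so no cancellation occurs: its coefficient in `α ∘ f` is the coefficient of `U^s`
in `α`. Hence `α ∘ f = 0` exactly when these coefficients vanish, and `Ann(f)_(0,j)` is spanned by
the remaining monomials. -/

section Contraction

variable {σ K : Type*} [CommSemiring K]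

theorem coeff_cAct (α f : MvPolynomial σ K) (e : σ →₀ ℕ) :
    coeff e (cAct α f) = ∑ a ∈ α.support, coeff a α * coeff (a + e) f := by
  classical
  unfold cAct genAct
  simp only [Finsupp.sum, finsupp_support_eq_support, coeff_sum, coeff_monomial]
  refine Finset.sum_congr rfl fun a _ => ?_
  rw [Finset.sum_eq_single (a + e)]
  · simp [cnu, coeff]
  · intro c _ hc
    split_ifs with hce
    · have hac : ¬ a ≤ c := fun hac =>
        hc ((tsub_eq_iff_eq_add_of_le hac).mp hce |>.trans (add_comm _ _))
      simp [cnu, hac]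
    · rfl
  · intro h
    rw [mem_support_iff, not_not, coeff] at h
    simp [h]

theorem cAct_eq_zero_of_forall_not_le {α f : MvPolynomial σ K}
    (h : ∀ a ∈ α.support, ∀ c ∈ f.support, ¬ a ≤ c) : cAct α f = 0 := by
  ext e
  rw [coeff_cAct, coeff_zero]
  refine Finset.sum_eq_zero fun a ha => ?_
  have hae : a + e ∉ f.support := fun hc => h a ha _ hc le_self_add
  rw [notMem_support_iff.mp hae, mul_zero]

theorem coeff_cAct_of_unique_ge {α f : MvPolynomial σ K} {c e : σ →₀ ℕ} (hec : e ≤ c)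
    (h : ∀ c' ∈ f.support, e ≤ c' → c' = c) :
    coeff e (cAct α f) = coeff (c - e) α * coeff c f := by
  rw [coeff_cAct, Finset.sum_eq_single (c - e)]
  · rw [tsub_add_cancel_of_le hec]
  · intro a _ ha
    have hae : a + e ∉ f.support := fun hc =>
      ha (by rw [← h _ hc le_add_self, add_tsub_cancel_right])
    rw [notMem_support_iff.mp hae, mul_zero]
  · intro hce
    rw [notMem_support_iff.mp hce, zero_mul]

end Contraction

section SumExponents

variable {ι κ M : Type*} [AddCommMonoid M]

@[simp]
theorem mapDomain_inr_apply_inl (s : κ →₀ M) (i : ι) : s.mapDomain Sum.inr (Sum.inl i) = 0 :=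
  Finsupp.mapDomain_of_notMem_range _ _ (by simp)

@[simp]
theorem mapDomain_inr_apply_inr (s : κ →₀ M) (k : κ) :
    s.mapDomain (Sum.inr (α := ι)) (Sum.inr k) = s k :=
  Finsupp.mapDomain_apply Sum.inr_injective _ _

theorem exists_eq_mapDomain_inr {a : ι ⊕ κ →₀ M} (h : ∀ i, a (Sum.inl i) = 0) :
    ∃ s : κ →₀ M, a = s.mapDomain Sum.inr :=
  ⟨_, (Finsupp.mapDomain_comapDomain _ Sum.inr_injective a fun x hx => by
    cases x with
    | inl i => exact absurd (h i) (Finsupp.mem_support_iff.mp hx)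
    | inr k => exact ⟨k, rfl⟩).symm⟩

theorem mapDomain_inr_le_single_inl_add_iff {s t : κ →₀ ℕ} {i : ι} {d : ℕ} :
    s.mapDomain Sum.inr ≤ Finsupp.single (Sum.inl i) d + t.mapDomain Sum.inr ↔ s ≤ t := by
  simp [Finsupp.le_def, Sum.forall]

end SumExponents

section CWNagata

variable {K ι κ : Type*} [CommSemiring K] {d : ℕ} {g : ι → κ →₀ ℕ}

noncomputable def cwNagataExp (d : ℕ) (g : ι → κ →₀ ℕ) (r : ι) : ι ⊕ κ →₀ ℕ :=
  Finsupp.single (Sum.inl r) d + (g r).mapDomain Sum.inr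

theorem eq_of_cwNagataExp_sub_le (hd : d ≠ 0) {r r' : ι} {a : ι ⊕ κ →₀ ℕ}
    (ha : a (Sum.inl r) = 0) (h : cwNagataExp d g r - a ≤ cwNagataExp d g r') : r' = r := by
  by_contra hne
  have := h (Sum.inl r)
  simp [cwNagataExp, ha, hne] at this
  omega

variable [Fintype ι]

variable (K) in
noncomputable def cwNagata (d : ℕ) (g : ι → κ →₀ ℕ) : MvPolynomial (ι ⊕ κ) K :=
  ∑ r, X (Sum.inl r) ^ d * monomial ((g r).mapDomain Sum.inr) 1

theorem cwNagata_eq_sum_monomial :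
    cwNagata K d g = ∑ r, monomial (cwNagataExp d g r) 1 := by
  simp only [cwNagata, cwNagataExp, X_pow_eq_monomial, monomial_mul, one_mul]

theorem exists_eq_cwNagataExp_of_mem_support {c : ι ⊕ κ →₀ ℕ}
    (hc : c ∈ (cwNagata K d g).support) :
    ∃ r, c = cwNagataExp d g r := by
  classical
  rw [cwNagata_eq_sum_monomial] at hc
  obtain ⟨r, -, hr⟩ := Finset.mem_biUnion.mp (support_sum hc)
  exact ⟨r, Finset.mem_singleton.mp (support_monomial_subset hr)⟩

theorem coeff_cwNagataExp_cwNagata (hd : d ≠ 0) (r : ι) :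
    coeff (cwNagataExp d g r) (cwNagata K d g) = 1 := by
  classical
  rw [cwNagata_eq_sum_monomial, coeff_sum, Finset.sum_eq_single r]
  · rw [coeff_monomial, if_pos rfl]
  · intro r' _ hr'
    have hne : cwNagataExp d g r' ≠ cwNagataExp d g r := fun h =>
      hr' (eq_of_cwNagataExp_sub_le hd (a := 0) rfl (by rw [tsub_zero, h]))
    rw [coeff_monomial, if_neg hne]
  · simp

theorem coeff_eq_zero_of_cAct_cwNagata_eq_zero (hd : d ≠ 0) {α : MvPolynomial (ι ⊕ κ) K}
    (h : cAct α (cwNagata K d g) = 0) {s : κ →₀ ℕ} {r : ι} (hs : s ≤ g r) :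
    coeff (s.mapDomain Sum.inr) α = 0 := by
  have hsr : s.mapDomain Sum.inr ≤ cwNagataExp d g r := mapDomain_inr_le_single_inl_add_iff.mpr hs
  have key := coeff_cAct_of_unique_ge (α := α) (f := cwNagata K d g)
    (tsub_le_self : cwNagataExp d g r - s.mapDomain Sum.inr ≤ _) fun c hc hle => by
      obtain ⟨r', rfl⟩ := exists_eq_cwNagataExp_of_mem_support hc
      rw [eq_of_cwNagataExp_sub_le hd (mapDomain_inr_apply_inl _ _) hle]
  rwa [h, coeff_zero, tsub_tsub_cancel_of_le hsr, coeff_cwNagataExp_cwNagata hd, mul_one,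
    eq_comm] at key

theorem cAct_cwNagata_eq_zero_iff (hd : d ≠ 0) {S : Set (κ →₀ ℕ)}
    {α : MvPolynomial (ι ⊕ κ) K}
    (hα : α ∈ restrictSupport K (Finsupp.mapDomain Sum.inr '' S)) :
    cAct α (cwNagata K d g) = 0 ↔
      ∀ s ∈ S, (∃ r, s ≤ g r) → coeff (s.mapDomain Sum.inr) α = 0 := by
  refine ⟨fun h s _ ⟨r, hs⟩ => coeff_eq_zero_of_cAct_cwNagata_eq_zero hd h hs, fun h => ?_⟩
  refine cAct_eq_zero_of_forall_not_le fun a ha c hc hac => ?_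
  obtain ⟨s, hsS, rfl⟩ := hα ha
  obtain ⟨r, rfl⟩ := exists_eq_cwNagataExp_of_mem_support hc
  exact mem_support_iff.mp ha (h s hsS ⟨r, mapDomain_inr_le_single_inl_add_iff.mp hac⟩)

theorem cAnn_cwNagata_inf_restrictSupport (hd : d ≠ 0) (S : Set (κ →₀ ℕ)) :
    (cAnn (cwNagata K d g)).restrictScalars K ⊓
        restrictSupport K (Finsupp.mapDomain Sum.inr '' S) =
      restrictSupport K (Finsupp.mapDomain Sum.inr '' {s ∈ S | ∀ r, ¬ s ≤ g r}) := by
  ext α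
  rw [Submodule.mem_inf, Submodule.restrictScalars_mem, mem_cAnn]
  constructor
  · rintro ⟨hann, hα⟩ a ha
    obtain ⟨s, hsS, rfl⟩ := hα ha
    have hcoeff := (cAct_cwNagata_eq_zero_iff hd hα).mp hann s hsS
    exact ⟨s, ⟨hsS, fun r hr => mem_support_iff.mp ha (hcoeff ⟨r, hr⟩)⟩, rfl⟩
  · intro hα
    have hαS : α ∈ restrictSupport K (Finsupp.mapDomain Sum.inr '' S) :=
      restrictSupport_mono K (Set.image_mono fun _ hs => hs.1) hα
    refine ⟨(cAct_cwNagata_eq_zero_iff hd hαS).mpr fun s _ ⟨r, hr⟩ => ?_, hαS⟩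
    by_contra hne
    obtain ⟨s', hs', hss'⟩ := hα (mem_support_iff.mpr hne)
    exact hs'.2 r (Finsupp.mapDomain_injective Sum.inr_injective hss' ▸ hr)

end CWNagata

theorem Tbi_zero_eq_restrictSupport {K : Type*} [CommSemiring K] {n m : ℕ} (j : ℕ) :
    Tbi K (n := n) (m := m) 0 j =
      restrictSupport K (Finsupp.mapDomain Sum.inr '' {s | ∑ k, s k = j}) := by
  have hexp : {c : Fin (n + 1) ⊕ Fin m →₀ ℕ | degX c = 0 ∧ degU c = j} =
      Finsupp.mapDomain Sum.inr '' {s : Fin m →₀ ℕ | ∑ k, s k = j} := by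
    ext c
    constructor
    · rintro ⟨hx, hu⟩
      obtain ⟨s, rfl⟩ :=
        exists_eq_mapDomain_inr (Finset.sum_eq_zero_iff.mp hx · (Finset.mem_univ _))
      exact ⟨s, by simpa [degU] using hu, rfl⟩
    · rintro ⟨s, hs, rfl⟩
      simpa [degX, degU] using hs
  rw [← hexp]
  rfl

open MvPolynomial in
theorem stmt_14_general {K : Type*} [Field K] (n m d₁ : ℕ)
    (hd₁ : 1 ≤ d₁)
    (g : Fin (n + 1) → (Fin m →₀ ℕ))
    (f : MvPolynomial (Fin (n + 1) ⊕ Fin m) K)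
    (hf : f = ∑ r, X (Sum.inl r) ^ d₁ * monomial ((g r).mapDomain Sum.inr) 1)
    (j : ℕ) :
    -- the component `Ann(f)_(0,j)` is spanned by the monomials `U^s` of degree `j`
    -- dividing none of the `g_r`
    (Submodule.restrictScalars K (cAnn f) ⊓ Tbi K (n := n) (m := m) 0 j =
      Submodule.span K {α : MvPolynomial (Fin (n + 1) ⊕ Fin m) K |
        ∃ s : Fin m →₀ ℕ, (∑ k, s k) = j ∧ (∀ r, ¬ s ≤ g r) ∧
          α = monomial (s.mapDomain Sum.inr) 1}) ∧
    -- equivalently: a combination of degree-`j` `U`-monomials annihilates `f` iff the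
    -- coefficient of every monomial dividing some `g_r` vanishes
    (∀ α ∈ Tbi K (n := n) (m := m) 0 j,
      (α ∈ cAnn f ↔ ∀ s : Fin m →₀ ℕ, (∑ k, s k) = j → (∃ r, s ≤ g r) →
        coeff (s.mapDomain Sum.inr) α = 0)) := by
  have hd : d₁ ≠ 0 := by omega
  obtain rfl : f = cwNagata K d₁ g := hf
  rw [Tbi_zero_eq_restrictSupport, cAnn_cwNagata_inf_restrictSupport hd, restrictSupport_eq_span]
  refine ⟨congrArg _ ?_, fun α hα => cAct_cwNagata_eq_zero_iff hd hα⟩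
  ext α
  simp [Set.image_image, eq_comm, and_assoc]

open MvPolynomial in
theorem stmt_14 {K : Type*} [Field K] [CharZero K] (n m d₁ d₂ : ℕ)
    (hd₁ : 1 ≤ d₁) (hd₂ : 2 ≤ d₂)
    (g : Fin (n + 1) → (Fin m →₀ ℕ))
    (hgdeg : ∀ r, (∑ k, g r k) = d₂)
    (hginj : Function.Injective g)
    (f : MvPolynomial (Fin (n + 1) ⊕ Fin m) K)
    (hf : f = ∑ r, X (Sum.inl r) ^ d₁ * monomial ((g r).mapDomain Sum.inr) 1)
    (j : ℕ) (hj : 1 ≤ j) (hjd : j ≤ d₂) :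
    -- the component `Ann(f)_(0,j)` is spanned by the monomials `U^s` of degree `j`
    -- dividing none of the `g_r`
    (Submodule.restrictScalars K (cAnn f) ⊓ Tbi K (n := n) (m := m) 0 j =
      Submodule.span K {α : MvPolynomial (Fin (n + 1) ⊕ Fin m) K |
        ∃ s : Fin m →₀ ℕ, (∑ k, s k) = j ∧ (∀ r, ¬ s ≤ g r) ∧
          α = monomial (s.mapDomain Sum.inr) 1}) ∧
    -- equivalently: a combination of degree-`j` `U`-monomials annihilates `f` iff the
    -- coefficient of every monomial dividing some `g_r` vanishes
    (∀ α ∈ Tbi K (n := n) (m := m) 0 j,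
      (α ∈ cAnn f ↔ ∀ s : Fin m →₀ ℕ, (∑ k, s k) = j → (∃ r, s ≤ g r) →
        coeff (s.mapDomain Sum.inr) α = 0)) :=
  stmt_14_general n m d₁ hd₁ g f hf j

end CW
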